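/- Let T₁, T₂, T₃ > 0 and let μ : ℝ → ℝ be C¹ and nonnegative with ∫₀^∞ μ(r)(1 + √r) dr < ∞. Suppose β : ℝ³ → ℝ is C³ and periodic with periods T₁, T₂, T₃ (β(x + Tᵢeᵢ) = β(x) for all x and i = 1,2,3), and suppose that for every x ∈ ℝ³, −Δβ(x) = 1 − ∫_{ℝ³} μ(|v|²/2 − β(x)) dv. Then ∇β ≡ 0; i.e. β is constant, so the electric field E₀ = −∇β vanishes identically. -/

import Mathlib

/-!
At a maximum of the periodic potential `β` its Laplacian is nonpositive, at a minimum nonnegative.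
In polar coordinates `ρ(b) = ∫ μ(|v|²/2 - b) dv = 4π ∫ √(2(s + b))₊ μ(s) ds`, which is
nondecreasing in `b` because `μ ≥ 0`. Comparing an arbitrary point with a maximum and a minimum
of `β` in `Δβ = ρ(β) - 1` gives `0 ≤ Δβ(x) ≤ 0`, so `β` is harmonic. Applying the divergence
theorem to `β ∇β` over a period box, where the boundary terms cancel by periodicity, gives
`∫ |∇β|² = -∫ β Δβ = 0`.
-/

open MeasureTheory Real

/-- The Laplacian of `β : ℝ³ → ℝ`, as the sum of second partial derivatives. -/
noncomputable def lap3 (β : EuclideanSpace ℝ (Fin 3) → ℝ) (x : EuclideanSpace ℝ (Fin 3)) : ℝ :=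
  ∑ i : Fin 3, iteratedFDeriv ℝ 2 β x ![EuclideanSpace.single i 1, EuclideanSpace.single i 1]

open Set Filter Topology Function Module Metric Laplacian InnerProductSpace

theorem IsLocalMax.deriv_deriv_nonpos {f : ℝ → ℝ} {t : ℝ} (h : IsLocalMax f t)
    (hc : ContinuousAt f t) : deriv (deriv f) t ≤ 0 := by
  by_contra! hpos
  -- the second-derivative test would make `t` a local minimum too
  have hconst : f =ᶠ[𝓝 t] fun _ => f t :=
    ((isLocalMin_of_deriv_deriv_pos hpos h.deriv_eq_zero hc).and h).mono
      fun _ hs => le_antisymm hs.2 hs.1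
  have : deriv f =ᶠ[𝓝 t] fun _ => 0 := by
    simpa using hconst.deriv
  simp [this.deriv_eq] at hpos

theorem IsLocalMax.iteratedFDeriv_two_nonpos {E : Type*} [NormedAddCommGroup E]
    [NormedSpace ℝ E] {f : E → ℝ} {x : E} (h : IsLocalMax f x) (hf : ContDiffAt ℝ 2 f x)
    (v : E) : iteratedFDeriv ℝ 2 f x ![v, v] ≤ 0 := by
  have hline : ∀ t : ℝ, HasDerivAt (fun t : ℝ => x + t • v) v t := fun t => by
    simpa using ((hasDerivAt_id t).smul_const v).const_add x
  have hline_tendsto : Tendsto (fun t : ℝ => x + t • v) (𝓝 0) (𝓝 x) := by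
    simpa using (hline 0).continuousAt.tendsto
  have hderiv : deriv (fun t : ℝ => f (x + t • v)) =ᶠ[𝓝 0]
      fun t => fderiv ℝ f (x + t • v) v := by
    filter_upwards [hline_tendsto.eventually (hf.eventually (by simp))] with t ht
    exact ((ht.differentiableAt two_ne_zero).hasFDerivAt.comp_hasDerivAt t (hline t)).deriv
  have hderiv2 : HasDerivAt (fun t : ℝ => fderiv ℝ f (x + t • v) v)
      (fderiv ℝ (fderiv ℝ f) x v v) 0 := by
    have hd : DifferentiableAt ℝ (fderiv ℝ f) x :=
      (hf.fderiv_right (m := 1) le_rfl).differentiableAt one_ne_zero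
    simpa using (hd.hasFDerivAt.comp_hasDerivAt_of_eq 0 (hline 0) (by simp)).clm_apply
      (hasDerivAt_const (0 : ℝ) v)
  have hmax : IsLocalMax (fun t : ℝ => f (x + t • v)) 0 :=
    IsLocalMax.comp_continuous (by simpa using h) (hline 0).continuousAt
  have := hmax.deriv_deriv_nonpos (hf.continuousAt.comp_of_eq (hline 0).continuousAt (by simp))
  rw [hderiv.deriv_eq, hderiv2.deriv] at this
  simpa [iteratedFDeriv_two_apply] using this

section Laplacian

variable {E : Type*} [NormedAddCommGroup E] [InnerProductSpace ℝ E] [FiniteDimensional ℝ E]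

theorem IsLocalMax.laplacian_nonpos {f : E → ℝ} {x : E} (h : IsLocalMax f x)
    (hf : ContDiffAt ℝ 2 f x) : Δ f x ≤ 0 := by
  rw [laplacian_eq_iteratedFDeriv_stdOrthonormalBasis]
  exact Finset.sum_nonpos fun i _ => h.iteratedFDeriv_two_nonpos hf _

theorem IsLocalMin.laplacian_nonneg {f : E → ℝ} {x : E} (h : IsLocalMin f x)
    (hf : ContDiffAt ℝ 2 f x) : 0 ≤ Δ f x := by
  have := h.neg.laplacian_nonpos hf.neg
  rw [show (fun y => -f y) = -f from rfl, laplacian_neg] at this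
  simpa using this

end Laplacian

theorem Function.Periodic.of_mem_span_int {E α : Type*} [AddCommGroup E] {f : E → α} {s : Set E}
    (hf : ∀ c ∈ s, Periodic f c) {w : E} (hw : w ∈ Submodule.span ℤ s) : Periodic f w := by
  induction hw using Submodule.span_induction with
  | mem c hc => exact hf c hc
  | zero => exact fun x => by simp
  | add v w _ _ hv hw => exact hv.add_period hw
  | smul n w _ hw => exact hw.zsmul n

section PeriodicExtremum

variable {ι E α : Type*} [Finite ι] [NormedAddCommGroup E] [NormedSpace ℝ E]
  [FiniteDimensional ℝ E] [TopologicalSpace α] {f : E → α}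

theorem Continuous.isCompact_range_of_periodic (hc : Continuous f) (b : Basis ι ℝ E)
    (hf : ∀ i, Periodic f (b i)) : IsCompact (range f) :=
  IsZLattice.isCompact_range_of_periodic _ f hc fun _ _ hw =>
    Periodic.of_mem_span_int (s := range b) (forall_mem_range.2 hf) hw _

theorem Continuous.exists_forall_ge_of_periodic [LinearOrder α] [ClosedIciTopology α]
    (hc : Continuous f) (b : Basis ι ℝ E) (hf : ∀ i, Periodic f (b i)) :
    ∃ x₀, ∀ x, f x ≤ f x₀ := by
  obtain ⟨_, ⟨x₀, rfl⟩, hmax⟩ :=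
    (hc.isCompact_range_of_periodic b hf).exists_isGreatest (range_nonempty f)
  exact ⟨x₀, fun x => hmax ⟨x, rfl⟩⟩

theorem Continuous.exists_forall_le_of_periodic [LinearOrder α] [ClosedIicTopology α]
    (hc : Continuous f) (b : Basis ι ℝ E) (hf : ∀ i, Periodic f (b i)) :
    ∃ x₀, ∀ x, f x₀ ≤ f x := by
  obtain ⟨_, ⟨x₀, rfl⟩, hmin⟩ :=
    (hc.isCompact_range_of_periodic b hf).exists_isLeast (range_nonempty f)
  exact ⟨x₀, fun x => hmin ⟨x, rfl⟩⟩

end PeriodicExtremum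

theorem laplacian_eq_zero_of_periodic_of_monotone {ι E : Type*} [Finite ι] [NormedAddCommGroup E]
    [InnerProductSpace ℝ E] [FiniteDimensional ℝ E] (b : Basis ι ℝ E) {β : E → ℝ}
    (hβ : ContDiff ℝ 2 β) (hper : ∀ i, Periodic β (b i)) {F : ℝ → ℝ} (hF : Monotone F)
    (hΔ : ∀ x, Δ β x = F (β x)) (x : E) : Δ β x = 0 := by
  obtain ⟨xmax, hxmax⟩ := hβ.continuous.exists_forall_ge_of_periodic b hper
  obtain ⟨xmin, hxmin⟩ := hβ.continuous.exists_forall_le_of_periodic b hper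
  have hmax : Δ β xmax ≤ 0 := IsLocalMax.laplacian_nonpos (Eventually.of_forall hxmax) hβ.contDiffAt
  have hmin : 0 ≤ Δ β xmin := IsLocalMin.laplacian_nonneg (Eventually.of_forall hxmin) hβ.contDiffAt
  rw [hΔ] at hmax hmin ⊢
  exact le_antisymm ((hF (hxmax x)).trans hmax) (hmin.trans (hF (hxmin x)))

protected theorem Function.Periodic.fderiv {E F : Type*} [NormedAddCommGroup E] [NormedSpace ℝ E]
    [NormedAddCommGroup F] [NormedSpace ℝ F] {f : E → F} {c : E} (h : Periodic f c) :
    Periodic (fderiv ℝ f) c := fun x => by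
  rw [← fderiv_comp_add_right, show (fun y => f (y + c)) = f from funext h]

section Box

variable {n : ℕ}

theorem integral_divergence_eq_zero_of_periodic {E : Type*} [NormedAddCommGroup E]
    [NormedSpace ℝ E] (a T : Fin (n + 1) → ℝ) (hT : 0 ≤ T)
    {F : Fin (n + 1) → (Fin (n + 1) → ℝ) → E} (hF : ∀ i, ContDiff ℝ 1 (F i))
    (hper : ∀ i, Periodic (F i) (Pi.single i (T i))) :
    ∫ y in Icc a (a + T), ∑ i, fderiv ℝ (F i) y (Pi.single i 1) = 0 := by
  have hcont : Continuous fun y => ∑ i, fderiv ℝ (F i) y (Pi.single i 1) :=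
    continuous_finsetSum _ fun i _ =>
      ((hF i).continuous_fderiv one_ne_zero).clm_apply continuous_const
  rw [integral_divergence_of_hasFDerivAt_off_countable' a (a + T) (by simpa using hT) F
    (fun i y => fderiv ℝ (F i) y) ∅ countable_empty (fun i => (hF i).continuous.continuousOn)
    (fun y _ i => ((hF i).differentiable one_ne_zero y).hasFDerivAt) hcont.integrableOn_Icc]
  refine Finset.sum_eq_zero fun i _ => sub_eq_zero.2 <| integral_congr_ae <| ae_of_all _ fun x => ?_
  have hface : Fin.insertNth i ((a + T) i) x =
      Fin.insertNth (α := fun _ => ℝ) i (a i) x + Pi.single i (T i) := by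
    have := Fin.insertNth_sub_same (α := fun _ => ℝ) i ((a + T) i) (a i) x
    rw [Pi.add_apply, add_sub_cancel_left] at this
    exact eq_add_of_sub_eq' this
  simp only [hface, hper i _]

theorem integral_sum_sq_fderiv_eq_zero_of_periodic (a T : Fin (n + 1) → ℝ) (hT : 0 ≤ T)
    {u : (Fin (n + 1) → ℝ) → ℝ} (hu : ContDiff ℝ 2 u)
    (hper : ∀ i, Periodic u (Pi.single i (T i)))
    (hΔ : ∀ y, ∑ i, iteratedFDeriv ℝ 2 u y ![Pi.single i 1, Pi.single i 1] = 0) :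
    ∫ y in Icc a (a + T), ∑ i, fderiv ℝ u y (Pi.single i 1) ^ 2 = 0 := by
  have hu' : ContDiff ℝ 1 (fderiv ℝ u) := hu.fderiv_right le_rfl
  have hdiv : ∀ y, ∑ i, fderiv ℝ (fun z => u z * fderiv ℝ u z (Pi.single i 1)) y (Pi.single i 1)
      = ∑ i, fderiv ℝ u y (Pi.single i 1) ^ 2 := fun y => by
    have hpartial : ∀ i, fderiv ℝ (fun z => u z * fderiv ℝ u z (Pi.single i 1)) y (Pi.single i 1)
        = u y * iteratedFDeriv ℝ 2 u y ![Pi.single i 1, Pi.single i 1]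
          + fderiv ℝ u y (Pi.single i 1) ^ 2 := fun i => by
      rw [fderiv_fun_mul (hu.differentiable two_ne_zero y)
        ((hu'.differentiable one_ne_zero y).clm_apply (differentiableAt_const _)),
        fderiv_clm_apply (hu'.differentiable one_ne_zero y) (differentiableAt_const _),
        iteratedFDeriv_two_apply]
      simp [sq]
    simp only [hpartial, Finset.sum_add_distrib, ← Finset.mul_sum, hΔ, mul_zero, zero_add]
  simp only [← hdiv]
  refine integral_divergence_eq_zero_of_periodic a T hT (fun i => ?_) (fun i => ?_)
  · exact (hu.of_le one_le_two).mul (hu'.clm_apply contDiff_const)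
  · exact (hper i).mul fun z => by simp only [(hper i).fderiv z]

theorem fderiv_eq_zero_of_periodic_of_sum_iteratedFDeriv_eq_zero (T : Fin (n + 1) → ℝ)
    (hT : ∀ i, 0 < T i) {u : (Fin (n + 1) → ℝ) → ℝ} (hu : ContDiff ℝ 2 u)
    (hper : ∀ i, Periodic u (Pi.single i (T i)))
    (hΔ : ∀ y, ∑ i, iteratedFDeriv ℝ 2 u y ![Pi.single i 1, Pi.single i 1] = 0)
    (y : Fin (n + 1) → ℝ) : fderiv ℝ u y = 0 := by
  set Q : (Fin (n + 1) → ℝ) → ℝ := fun z => ∑ i, fderiv ℝ u z (Pi.single i 1) ^ 2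
  have hQc : Continuous Q := continuous_finsetSum _ fun i _ =>
    (((hu.continuous_fderiv two_ne_zero).clm_apply continuous_const).pow 2)
  have hQnn : 0 ≤ Q := fun z => Finset.sum_nonneg fun i _ => sq_nonneg _
  -- centring the period box at `y` puts `y` in its interior
  set a := y - (2⁻¹ : ℝ) • T
  have hQ : Q =ᵐ[volume.restrict (Icc a (a + T))] 0 :=
    (integral_eq_zero_iff_of_nonneg hQnn hQc.integrableOn_Icc).1
      (integral_sum_sq_fderiv_eq_zero_of_periodic a T (fun i => (hT i).le) hu hper hΔ)
  have hbox : pi univ (fun i => Ioo (a i) ((a + T) i)) ⊆ Icc a (a + T) := by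
    rw [← pi_univ_Icc]
    exact pi_mono fun _ _ => Ioo_subset_Icc_self
  have hy : y ∈ pi univ (fun i => Ioo (a i) ((a + T) i)) := fun i _ => by
    have := hT i
    simp only [a, Pi.add_apply, Pi.sub_apply, Pi.smul_apply, smul_eq_mul, mem_Ioo]
    constructor <;> linarith
  have hQy : Q y = 0 := Measure.eqOn_open_of_ae_eq (ae_restrict_of_ae_restrict_of_subset hbox hQ)
    (isOpen_set_pi finite_univ fun i _ => isOpen_Ioo) hQc.continuousOn continuousOn_const hy
  have hpartial : ∀ i, fderiv ℝ u y (Pi.single i 1) = 0 := fun i =>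
    pow_eq_zero_iff two_ne_zero |>.1 <|
      (Finset.sum_eq_zero_iff_of_nonneg fun i _ => sq_nonneg _).1 hQy i (Finset.mem_univ i)
  exact ContinuousLinearMap.coe_injective <| (Pi.basisFun ℝ (Fin (n + 1))).ext fun i => by
    simpa using hpartial i

theorem fderiv_eq_zero_of_periodic_of_laplacian_eq_zero (T : Fin (n + 1) → ℝ) (hT : ∀ i, 0 < T i)
    {β : EuclideanSpace ℝ (Fin (n + 1)) → ℝ} (hβ : ContDiff ℝ 2 β)
    (hper : ∀ i, Periodic β (T i • EuclideanSpace.single i 1)) (hΔ : ∀ x, Δ β x = 0)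
    (x : EuclideanSpace ℝ (Fin (n + 1))) : fderiv ℝ β x = 0 := by
  set e := EuclideanSpace.equiv (Fin (n + 1)) ℝ
  have he : ∀ i, e.symm (Pi.single i 1) = EuclideanSpace.single i 1 := fun i => rfl
  have hu : ContDiff ℝ 2 (β ∘ e.symm) := hβ.comp e.symm.contDiff
  have hΔu : ∀ y, ∑ i, iteratedFDeriv ℝ 2 (β ∘ e.symm) y ![Pi.single i 1, Pi.single i 1] = 0 := by
    intro y
    have hcomp := (e.symm : (Fin (n + 1) → ℝ) →L[ℝ] _).iteratedFDeriv_comp_right hβ y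
      (i := 2) le_rfl
    simp only [ContinuousLinearEquiv.coe_coe] at hcomp
    simp only [hcomp, ContinuousMultilinearMap.compContinuousLinearMap_apply]
    have := congrFun (laplacian_eq_iteratedFDeriv_orthonormalBasis β
      (EuclideanSpace.basisFun (Fin (n + 1)) ℝ)) (e.symm y)
    simp only [EuclideanSpace.basisFun_apply, hΔ] at this
    convert this.symm using 3 with i
    ext j
    fin_cases j <;> simp [he]
  have hperu : ∀ i, Periodic (β ∘ e.symm) (Pi.single i (T i)) := fun i y => by
    have hsingle : e.symm (Pi.single i (T i)) = T i • EuclideanSpace.single i 1 := by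
      ext j
      by_cases hj : j = i <;> simp [e, hj]
    simpa [hsingle] using hper i (e.symm y)
  have := fderiv_eq_zero_of_periodic_of_sum_iteratedFDeriv_eq_zero T hT hu hperu hΔu (e x)
  rw [show β = (β ∘ e.symm) ∘ e by ext; simp, e.comp_right_fderiv, this,
    ContinuousLinearMap.zero_comp]

end Box

theorem image_Ioi_sq_div_two_sub (b : ℝ) : (fun r : ℝ => r ^ 2 / 2 - b) '' Ioi 0 = Ioi (-b) := by
  ext s
  constructor
  · rintro ⟨r, hr, rfl⟩
    have : 0 < r ^ 2 / 2 := by have : (0:ℝ) < r := hr; positivity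
    simp only [mem_Ioi]; linarith
  · intro hs
    have hs : 0 < 2 * (s + b) := by simp only [mem_Ioi] at hs; linarith
    refine ⟨√(2 * (s + b)), sqrt_pos.2 hs, ?_⟩
    simp only [sq_sqrt hs.le]; ring

/-- `√` vanishes on negative reals, so the right-hand side only sees `s > -b`. -/
theorem integral_Ioi_sq_mul_comp_half_sq_sub (g : ℝ → ℝ) (b : ℝ) :
    ∫ r in Ioi 0, r ^ 2 * g (r ^ 2 / 2 - b) = ∫ s, √(2 * (s + b)) * g s := by
  have hderiv : ∀ r ∈ Ioi (0 : ℝ), HasDerivWithinAt (fun r : ℝ => r ^ 2 / 2 - b) r (Ioi 0) r :=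
    fun r _ => by simpa using (((hasDerivAt_pow 2 r).div_const 2).sub_const b).hasDerivWithinAt
  have hmono : MonotoneOn (fun r : ℝ => r ^ 2 / 2 - b) (Ioi 0) := fun r hr s _ hrs => by
    have : (0:ℝ) ≤ r := le_of_lt hr
    dsimp only; gcongr
  calc ∫ r in Ioi 0, r ^ 2 * g (r ^ 2 / 2 - b)
      = ∫ s in (fun r : ℝ => r ^ 2 / 2 - b) '' Ioi 0, √(2 * (s + b)) * g s := by
        rw [integral_image_eq_integral_deriv_smul_of_monotoneOn measurableSet_Ioi hderiv hmono]
        refine setIntegral_congr_fun measurableSet_Ioi fun r (hr : 0 < r) => ?_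
        rw [smul_eq_mul, show 2 * (r ^ 2 / 2 - b + b) = r ^ 2 by ring, sqrt_sq hr.le]
        ring
    _ = ∫ s, √(2 * (s + b)) * g s := by
        rw [image_Ioi_sq_div_two_sub]
        refine setIntegral_eq_integral_of_forall_compl_eq_zero fun s hs => ?_
        rw [sqrt_eq_zero'.2 (by simp only [mem_Ioi, not_lt] at hs; linarith), zero_mul]

theorem integral_comp_half_sq_norm_sub (μ : ℝ → ℝ) (b : ℝ) :
    ∫ v : EuclideanSpace ℝ (Fin 3), μ (‖v‖ ^ 2 / 2 - b) =
      3 * volume.real (ball (0 : EuclideanSpace ℝ (Fin 3)) 1) * ∫ s, √(2 * (s + b)) * μ s := by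
  rw [integral_fun_norm_addHaar volume (fun r => μ (r ^ 2 / 2 - b)), finrank_euclideanSpace_fin]
  simp [integral_Ioi_sq_mul_comp_half_sq_sub, mul_assoc]

theorem sqrt_two_mul_add_le (b : ℝ) {s : ℝ} (hs : 0 ≤ s) :
    √(2 * (s + b)) ≤ √(2 * (1 + |b|)) * (1 + √s) := by
  have hsq : 2 * (s + b) ≤ 2 * (1 + |b|) * (1 + √s) ^ 2 := by
    have := sq_sqrt hs
    nlinarith [le_abs_self b, abs_nonneg b, sqrt_nonneg s]
  calc √(2 * (s + b)) ≤ √(2 * (1 + |b|) * (1 + √s) ^ 2) := sqrt_le_sqrt hsq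
    _ = √(2 * (1 + |b|)) * (1 + √s) := by
      rw [sqrt_mul (by positivity), sqrt_sq (by positivity)]

theorem integrable_sqrt_two_mul_add_mul {μ : ℝ → ℝ} (hμc : Continuous μ) (hμpos : ∀ s, 0 ≤ μ s)
    (hμint : IntegrableOn (fun r => μ r * (1 + √r)) (Ioi 0)) (b : ℝ) :
    Integrable fun s => √(2 * (s + b)) * μ s := by
  have hc : Continuous fun s => √(2 * (s + b)) * μ s := by fun_prop
  have hneg : IntegrableOn (fun s => √(2 * (s + b)) * μ s) (Iic 0) := by
    refine (hc.integrableOn_Icc (a := -|b|) (b := 0)).of_forall_sdiff_eq_zero measurableSet_Iic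
      fun s hs => ?_
    obtain ⟨hs0, hs⟩ := hs
    have : s < -|b| := by
      by_contra! h
      exact hs ⟨h, hs0⟩
    rw [sqrt_eq_zero'.2 (by linarith [le_abs_self b]), zero_mul]
  have hpos : IntegrableOn (fun s => √(2 * (s + b)) * μ s) (Ioi 0) := by
    refine (hμint.const_mul √(2 * (1 + |b|))).mono' hc.aestronglyMeasurable.restrict
      ((ae_restrict_iff' measurableSet_Ioi).2 (ae_of_all _ fun s (hs : 0 < s) => ?_))
    rw [norm_of_nonneg (mul_nonneg (sqrt_nonneg _) (hμpos s))]
    calc √(2 * (s + b)) * μ s ≤ √(2 * (1 + |b|)) * (1 + √s) * μ s :=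
          mul_le_mul_of_nonneg_right (sqrt_two_mul_add_le b hs.le) (hμpos s)
      _ = √(2 * (1 + |b|)) * (μ s * (1 + √s)) := by ring
  simpa [Iic_union_Ioi] using hneg.union hpos

theorem monotone_integral_comp_half_sq_norm_sub {μ : ℝ → ℝ} (hμc : Continuous μ)
    (hμpos : ∀ s, 0 ≤ μ s) (hμint : IntegrableOn (fun r => μ r * (1 + √r)) (Ioi 0)) :
    Monotone fun b => ∫ v : EuclideanSpace ℝ (Fin 3), μ (‖v‖ ^ 2 / 2 - b) := by
  intro b₁ b₂ hb
  simp only [integral_comp_half_sq_norm_sub]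
  refine mul_le_mul_of_nonneg_left ?_ (by positivity)
  refine integral_mono_of_nonneg (ae_of_all _ fun s => mul_nonneg (sqrt_nonneg _) (hμpos s))
    (integrable_sqrt_two_mul_add_mul hμc hμpos hμint b₂) (ae_of_all _ fun s => ?_)
  exact mul_le_mul_of_nonneg_right (sqrt_le_sqrt (by linarith)) (hμpos s)

theorem lap3_eq_laplacian (β : EuclideanSpace ℝ (Fin 3) → ℝ) : lap3 β = Δ β := by
  ext x
  simp [lap3, laplacian_eq_iteratedFDeriv_orthonormalBasis β (EuclideanSpace.basisFun (Fin 3) ℝ)]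

/-- Non-existence of genuinely 3D radial BGK waves: if `μ : ℝ → ℝ` is `C¹`, nonnegative, with
`∫₀^∞ μ(r)(1 + √r) dr < ∞`, `β : ℝ³ → ℝ` is `C³`, periodic with periods `T₁, T₂, T₃`, and
satisfies `−Δβ(x) = 1 − ∫_{ℝ³} μ(|v|²/2 − β(x)) dv` for all `x`, then `∇β ≡ 0`. -/
theorem stmt_2 (T₁ T₂ T₃ : ℝ) (hT₁ : 0 < T₁) (hT₂ : 0 < T₂) (hT₃ : 0 < T₃)
    (μ : ℝ → ℝ) (hμreg : ContDiff ℝ 1 μ) (hμpos : ∀ s, 0 ≤ μ s)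
    (hμint : IntegrableOn (fun r => μ r * (1 + Real.sqrt r)) (Set.Ioi (0 : ℝ)))
    (β : EuclideanSpace ℝ (Fin 3) → ℝ) (hβ : ContDiff ℝ 3 β)
    (hper1 : ∀ x, β (x + T₁ • EuclideanSpace.single (0 : Fin 3) (1 : ℝ)) = β x)
    (hper2 : ∀ x, β (x + T₂ • EuclideanSpace.single (1 : Fin 3) (1 : ℝ)) = β x)
    (hper3 : ∀ x, β (x + T₃ • EuclideanSpace.single (2 : Fin 3) (1 : ℝ)) = β x)
    (hPoisson : ∀ x, -lap3 β x = 1 - ∫ v : EuclideanSpace ℝ (Fin 3), μ (‖v‖ ^ 2 / 2 - β x)) :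
    ∀ x, gradient β x = 0 := by
  set T : Fin 3 → ℝ := ![T₁, T₂, T₃]
  have hT : ∀ i, 0 < T i := fun i => by fin_cases i <;> assumption
  have hper : ∀ i, Periodic β (T i • EuclideanSpace.single i 1) := fun i => by
    fin_cases i <;> assumption
  have hβ2 : ContDiff ℝ 2 β := hβ.of_le (by norm_num)
  have hΔ : ∀ x, Δ β x = (∫ v : EuclideanSpace ℝ (Fin 3), μ (‖v‖ ^ 2 / 2 - β x)) - 1 := fun x => by
    rw [← lap3_eq_laplacian]; linarith [hPoisson x]
  have hmono := monotone_integral_comp_half_sq_norm_sub hμreg.continuous hμpos hμint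
  let b := (EuclideanSpace.basisFun (Fin 3) ℝ).toBasis.isUnitSMul fun i => (hT i).ne'.isUnit
  have hharm : ∀ x, Δ β x = 0 := laplacian_eq_zero_of_periodic_of_monotone b hβ2
    (fun i => by simpa [b, Basis.isUnitSMul_apply] using hper i)
    (fun _ _ h => sub_le_sub_right (hmono h) 1) hΔ
  intro x
  simp [gradient, fderiv_eq_zero_of_periodic_of_laplacian_eq_zero T hT hβ2 hper hharm x]
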